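/- arXiv:1908.01203 — 4 statements merged into one kernel-verified Lean document; each statement's English description precedes it below -/
import Mathlib

section
/- Let ρ = (1/(d_S d_E)) I_{SE} and σ = |1_S⟩⟨1_S| ⊗ |1_E⟩⟨1_E| be density operators on H_S ⊗ H_E, and let Λ_S be the linear map on the span of {I_S/d_S, |1_S⟩⟨1_S|} defined by Λ_S(I_S/d_S) = ρ and Λ_S(|1_S⟩⟨1_S|) = σ. Then Λ_S is not a positive map: for a ≥ 0 and −a/d_S ≤ b < −a/(d_S d_E) with (a,b) ≠ (0,0), the operator x = a·(I_S/d_S) + b·|1_S⟩⟨1_S| is positive semidefinite but Λ_S(x) = aρ + bσ is not positive semidefinite. -/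
open scoped Kronecker ComplexOrder Matrix

/-- Logarithm of a Hermitian matrix via its spectral decomposition
(zero eigenvalues contribute `log 0 = 0`). -/
noncomputable def matLog {n : Type*} [Fintype n] [DecidableEq n] (M : Matrix n n ℂ) :
    Matrix n n ℂ :=
  if h : M.IsHermitian then
    (h.eigenvectorUnitary : Matrix n n ℂ) *
      Matrix.diagonal (fun i => (Real.log (h.eigenvalues i) : ℂ)) *
      star (h.eigenvectorUnitary : Matrix n n ℂ)
  else 0

/-- von Neumann entropy `S(ρ) = -Tr(ρ log ρ)`. -/
noncomputable def vnEntropy {n : Type*} [Fintype n] [DecidableEq n] (M : Matrix n n ℂ) : ℝ :=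
  -(M * matLog M).trace.re

/-- Quantum relative entropy `S(ρ‖σ) = Tr(ρ log ρ) - Tr(ρ log σ)`. -/
noncomputable def relEntropy {n : Type*} [Fintype n] [DecidableEq n]
    (ρ σ : Matrix n n ℂ) : ℝ :=
  ((ρ * matLog ρ).trace - (ρ * matLog σ).trace).re

/-- A density operator: positive semidefinite with unit trace. -/
def IsDensity {n : Type*} [Fintype n] (M : Matrix n n ℂ) : Prop :=
  M.PosSemidef ∧ M.trace = 1

/-- Partial trace over the left tensor factor. -/
noncomputable def ptraceLeft {a b : Type*} [Fintype a] (M : Matrix (a × b) (a × b) ℂ) :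
    Matrix b b ℂ :=
  Matrix.of fun i j => ∑ k, M (k, i) (k, j)

/-- Partial trace over the right tensor factor. -/
noncomputable def ptraceRight {a b : Type*} [Fintype b] (M : Matrix (a × b) (a × b) ℂ) :
    Matrix a a ℂ :=
  Matrix.of fun i j => ∑ k, M (i, k) (j, k)

/-- Mutual information `I(A:B) = S(ρ_A) + S(ρ_B) - S(ρ_AB)`. -/
noncomputable def mutInfo {a b : Type*} [Fintype a] [Fintype b] [DecidableEq a] [DecidableEq b]
    (M : Matrix (a × b) (a × b) ℂ) : ℝ :=
  vnEntropy (ptraceRight M) + vnEntropy (ptraceLeft M) - vnEntropy M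

/-- The extension `id_r ⊗ Φ` of a map `Φ` on matrices, acting blockwise. -/
noncomputable def idTen {r s t : Type*} [Fintype s]
    (Φ : Matrix s s ℂ → Matrix t t ℂ) (M : Matrix (r × s) (r × s) ℂ) :
    Matrix (r × t) (r × t) ℂ :=
  Matrix.of fun x y => Φ (Matrix.of fun a b => M (x.1, a) (y.1, b)) x.2 y.2

/-!
Both operators have the form `c • 1 + b • P` with `P` the projection onto a unit vector, whose
eigenvalues are `c` and `c + b`. For `x` these are `a / d_S ≥ 0` and `a / d_S + b ≥ 0`; for `Λ_S x`
the projection `|1_S⟩⟨1_S| ⊗ |1_E⟩⟨1_E|` is onto the product vector, and `a / (d_S d_E) + b < 0`.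
-/

open Matrix

theorem vecMulVec_star_mul_self {R n : Type*} [Semiring R] [Star R] [Fintype n] {v : n → R}
    (hv : star v ⬝ᵥ v = 1) :
    vecMulVec v (star v) * vecMulVec v (star v) = vecMulVec v (star v) := by
  rw [vecMulVec_mul_vecMulVec, hv, one_smul]

theorem vecMulVec_kronecker_vecMulVec {R l m n p : Type*} [CommMonoid R]
    (x : l → R) (y : m → R) (x' : n → R) (y' : p → R) :
    vecMulVec x y ⊗ₖ vecMulVec x' y' =
      vecMulVec (fun i : l × n => x i.1 * x' i.2) (fun j : m × p => y j.1 * y' j.2) := by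
  ext i j
  simp only [kroneckerMap_apply, vecMulVec_apply, mul_mul_mul_comm]

theorem dotProduct_mul_dotProduct {R m n : Type*} [CommSemiring R] [Fintype m] [Fintype n]
    (x x' : m → R) (y y' : n → R) :
    (x ⬝ᵥ x') * (y ⬝ᵥ y') =
      (fun i : m × n => x i.1 * y i.2) ⬝ᵥ (fun i : m × n => x' i.1 * y' i.2) := by
  simp only [dotProduct, Finset.sum_mul_sum, Fintype.sum_prod_type]
  exact Finset.sum_congr rfl fun i _ => Finset.sum_congr rfl fun j _ => mul_mul_mul_comm _ _ _ _

section RankOne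

variable {R n : Type*} [CommRing R] [PartialOrder R] [StarRing R] [Fintype n] [DecidableEq n]
  {v : n → R}

theorem posSemidef_one_sub_vecMulVec_star [StarOrderedRing R] (hv : star v ⬝ᵥ v = 1) :
    (1 - vecMulVec v (star v)).PosSemidef := by
  set P := vecMulVec v (star v)
  have hP : Pᴴ = P := (posSemidef_vecMulVec_self_star v).isHermitian
  have hsq : (1 - P)ᴴ * (1 - P) = 1 - P := by
    rw [conjTranspose_sub, conjTranspose_one, hP, sub_mul, mul_sub, mul_sub, one_mul, one_mul,
      mul_one, vecMulVec_star_mul_self hv]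
    abel
  exact hsq ▸ posSemidef_conjTranspose_mul_self (1 - P)

theorem posSemidef_smul_one_add_smul_vecMulVec_star [StarOrderedRing R] (hv : star v ⬝ᵥ v = 1)
    {c b : R} (hc : 0 ≤ c) (hcb : 0 ≤ c + b) :
    (c • 1 + b • vecMulVec v (star v)).PosSemidef := by
  have hsplit : c • 1 + b • vecMulVec v (star v) =
      (c + b) • vecMulVec v (star v) + c • (1 - vecMulVec v (star v)) := by
    module
  rw [hsplit]
  exact ((posSemidef_vecMulVec_self_star v).smul hcb).add
    ((posSemidef_one_sub_vecMulVec_star hv).smul hc)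

theorem not_posSemidef_smul_one_add_smul_vecMulVec_star (hv : star v ⬝ᵥ v = 1)
    {c b : R} (hcb : ¬ 0 ≤ c + b) :
    ¬ (c • 1 + b • vecMulVec v (star v)).PosSemidef := by
  intro hpsd
  have hform : star v ⬝ᵥ ((c • 1 + b • vecMulVec v (star v)) *ᵥ v) = c + b := by
    simp [add_mulVec, smul_mulVec, vecMulVec_mulVec, hv, dotProduct_add, dotProduct_smul]
  exact hcb (hform ▸ hpsd.dotProduct_mulVec_nonneg v)

end RankOne

theorem assignment_map_not_positive_general
    (dS dE : ℕ)
    (v : Fin dS → ℂ) (u : Fin dE → ℂ)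
    (hv : star v ⬝ᵥ v = 1) (hu : star u ⬝ᵥ u = 1)
    (a b : ℝ) (ha : 0 ≤ a) (hb1 : -(a / dS) ≤ b) (hb2 : b < -(a / (dS * dE))) :
    ((a : ℂ) • ((dS : ℂ)⁻¹ • (1 : Matrix (Fin dS) (Fin dS) ℂ)) +
        (b : ℂ) • Matrix.vecMulVec v (star v)).PosSemidef ∧
    ¬ ((a : ℂ) • (((dS : ℂ) * (dE : ℂ))⁻¹ •
          (1 : Matrix (Fin dS × Fin dE) (Fin dS × Fin dE) ℂ)) +
        (b : ℂ) • (Matrix.vecMulVec v (star v) ⊗ₖ Matrix.vecMulVec u (star u))).PosSemidef := by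
  have hcoe : ∀ d : ℕ, (a : ℂ) * (d : ℂ)⁻¹ = ((a / d : ℝ) : ℂ) := fun d => by push_cast; ring
  rw [smul_smul, smul_smul, ← Nat.cast_mul, hcoe, hcoe]
  refine ⟨posSemidef_smul_one_add_smul_vecMulVec_star hv ?_ ?_, ?_⟩
  · exact Complex.zero_le_real.mpr (by positivity)
  · rw [← Complex.ofReal_add, Complex.zero_le_real]
    linarith
  · set w : Fin dS × Fin dE → ℂ := fun i => v i.1 * u i.2
    have hstar : (fun j : Fin dS × Fin dE => star v j.1 * star u j.2) = star w :=
      funext fun j => (star_mul' (v j.1) (u j.2)).symm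
    rw [vecMulVec_kronecker_vecMulVec, hstar]
    refine not_posSemidef_smul_one_add_smul_vecMulVec_star ?_ ?_
    · rw [← hstar, ← dotProduct_mul_dotProduct, hv, hu, one_mul]
    · rw [← Complex.ofReal_add, Complex.zero_le_real, not_le, Nat.cast_mul]
      linarith

/-- the assignment map determined by `Λ(I_S/d_S) = ρ`, `Λ(|1⟩⟨1|) = σ`
is not positive: `x = a (I_S/d_S) + b |1⟩⟨1|` is PSD while `Λ(x) = aρ + bσ` is not. -/
theorem assignment_map_not_positive
    (dS dE : ℕ) (hdS : 2 ≤ dS) (hdE : 2 ≤ dE)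
    (v : Fin dS → ℂ) (u : Fin dE → ℂ)
    (hv : star v ⬝ᵥ v = 1) (hu : star u ⬝ᵥ u = 1)
    (a b : ℝ) (ha : 0 ≤ a) (hb1 : -(a / dS) ≤ b) (hb2 : b < -(a / (dS * dE)))
    (hab : (a, b) ≠ (0, 0)) :
    ((a : ℂ) • ((dS : ℂ)⁻¹ • (1 : Matrix (Fin dS) (Fin dS) ℂ)) +
        (b : ℂ) • Matrix.vecMulVec v (star v)).PosSemidef ∧
    ¬ ((a : ℂ) • (((dS : ℂ) * (dE : ℂ))⁻¹ •
          (1 : Matrix (Fin dS × Fin dE) (Fin dS × Fin dE) ℂ)) +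
        (b : ℂ) • (Matrix.vecMulVec v (star v) ⊗ₖ Matrix.vecMulVec u (star u))).PosSemidef :=
  assignment_map_not_positive_general dS dE v u hv hu a b ha hb1 hb2
end

section
/- A linear map Φ on operators of a finite-dimensional Hilbert space is completely positive if and only if its Choi matrix (id ⊗ Φ)(|ξ⟩⟨ξ|), where |ξ⟩ = Σ_i |i⟩|i⟩, is positive semidefinite. -/
open scoped Kronecker ComplexOrder Matrix

/-! The Choi matrix `C = (id ⊗ Φ)(|ξ⟩⟨ξ|)` is the image of a positive matrix, which gives one
direction. Conversely, `C (i, a) (j, b) = Φ (|i⟩⟨j|) a b`, so `C` determines the linear map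
`Φ`. Factoring `C = Bᴴ B` turns this into a Kraus form `Φ A = ∑ₖ Kₖ A Kₖᴴ`,
and then `(id ⊗ Φ) M = ∑ₖ (1 ⊗ Kₖ) M (1 ⊗ Kₖ)ᴴ` is positive whenever `M` is. -/

open Matrix

section Choi

variable {r s t : Type*}

lemma idTen_sum [Fintype s] {ι : Type*} (u : Finset ι)
    (Φ : ι → Matrix s s ℂ → Matrix t t ℂ) (M : Matrix (r × s) (r × s) ℂ) :
    idTen (fun A => ∑ k ∈ u, Φ k A) M = ∑ k ∈ u, idTen (Φ k) M := by
  ext x y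
  simp only [idTen, of_apply, Matrix.sum_apply]

lemma idTen_conj [Fintype r] [Fintype s] [DecidableEq r] (K : Matrix t s ℂ)
    (M : Matrix (r × s) (r × s) ℂ) :
    idTen (fun A => K * A * Kᴴ) M =
      ((1 : Matrix r r ℂ) ⊗ₖ K) * M * ((1 : Matrix r r ℂ) ⊗ₖ K)ᴴ := by
  ext x y
  simp [idTen, mul_apply, one_apply, Fintype.sum_prod_type, Finset.sum_mul,
    apply_ite (starRingEnd ℂ)]

/-- `|ξ⟩⟨ξ|` for `ξ = ∑ i, |i⟩|i⟩`. -/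
def maxEntangled (s : Type*) [DecidableEq s] : Matrix (s × s) (s × s) ℂ :=
  of fun x y => if x.1 = x.2 ∧ y.1 = y.2 then 1 else 0

lemma posSemidef_maxEntangled [Finite s] [DecidableEq s] : (maxEntangled s).PosSemidef := by
  convert posSemidef_vecMulVec_self_star fun x : s × s => if x.1 = x.2 then (1 : ℂ) else 0
  ext x y
  by_cases hx : x.1 = x.2 <;> by_cases hy : y.1 = y.2 <;>
    simp [maxEntangled, vecMulVec_apply, hx, hy]

variable [Fintype s] [DecidableEq s]

noncomputable def choiMatrix (Φ : Matrix s s ℂ → Matrix t t ℂ) :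
    Matrix (s × t) (s × t) ℂ :=
  idTen Φ (maxEntangled s)

lemma choiMatrix_apply (Φ : Matrix s s ℂ → Matrix t t ℂ) (i j : s) (a b : t) :
    choiMatrix Φ (i, a) (j, b) = Φ (single i j 1) a b := by
  unfold choiMatrix idTen maxEntangled
  simp only [of_apply]
  congr 2

lemma apply_eq_sum_choiMatrix (Φ : Matrix s s ℂ →ₗ[ℂ] Matrix t t ℂ) (A : Matrix s s ℂ)
    (a b : t) : Φ A a b = ∑ i, ∑ j, A i j * choiMatrix Φ (i, a) (j, b) := by
  conv_lhs => rw [matrix_eq_sum_single A]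
  simp only [map_sum, Matrix.sum_apply, choiMatrix_apply]
  refine Finset.sum_congr rfl fun i _ => Finset.sum_congr rfl fun j _ => ?_
  have hsingle : single i j (A i j) = A i j • single i j (1 : ℂ) := by
    rw [smul_single, smul_eq_mul, mul_one]
  rw [hsingle, map_smul, Matrix.smul_apply, smul_eq_mul]

def krausOfChoiFactor {κ : Type*} (B : Matrix κ (s × t) ℂ) (k : κ) : Matrix t s ℂ :=
  of fun a i => star (B k (i, a))

lemma eq_sum_conj_krausOfChoiFactor {κ : Type*} [Fintype κ]
    (Φ : Matrix s s ℂ →ₗ[ℂ] Matrix t t ℂ) (B : Matrix κ (s × t) ℂ)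
    (hB : choiMatrix Φ = Bᴴ * B) (A : Matrix s s ℂ) :
    Φ A = ∑ k, krausOfChoiFactor B k * A * (krausOfChoiFactor B k)ᴴ := by
  ext a b
  rw [apply_eq_sum_choiMatrix, hB]
  simp only [krausOfChoiFactor, mul_apply, conjTranspose_apply, of_apply, star_star,
    Matrix.sum_apply, Finset.mul_sum, Finset.sum_mul]
  refine ((Finset.sum_congr rfl fun i _ => Finset.sum_comm).trans Finset.sum_comm).trans ?_
  exact Finset.sum_congr rfl fun k _ => Finset.sum_comm.trans <|
    Finset.sum_congr rfl fun j _ => Finset.sum_congr rfl fun i _ => by ring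

open scoped MatrixOrder in
lemma posSemidef_idTen_of_posSemidef_choiMatrix [Fintype r] [Fintype t]
    (Φ : Matrix s s ℂ →ₗ[ℂ] Matrix t t ℂ) (hΦ : (choiMatrix Φ).PosSemidef)
    {M : Matrix (r × s) (r × s) ℂ} (hM : M.PosSemidef) : (idTen Φ M).PosSemidef := by
  classical
  obtain ⟨B, hB⟩ := CStarAlgebra.nonneg_iff_eq_star_mul_self.mp hΦ.nonneg
  have hKraus : ⇑Φ = fun A => ∑ k, krausOfChoiFactor B k * A * (krausOfChoiFactor B k)ᴴ :=
    funext (eq_sum_conj_krausOfChoiFactor Φ B hB)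
  rw [hKraus, idTen_sum]
  refine posSemidef_sum _ fun k _ => ?_
  rw [idTen_conj]
  exact hM.mul_mul_conjTranspose_same _

end Choi

/-- Choi's theorem: a linear map is completely positive iff its Choi
matrix `(id ⊗ Φ)(|ξ⟩⟨ξ|)` is positive semidefinite. -/
theorem completely_positive_iff_choi_posSemidef
    (d : ℕ) (Φ : Matrix (Fin d) (Fin d) ℂ →ₗ[ℂ] Matrix (Fin d) (Fin d) ℂ) :
    (∀ (m : ℕ) (M : Matrix (Fin m × Fin d) (Fin m × Fin d) ℂ),
        M.PosSemidef → (idTen (r := Fin m) ⇑Φ M).PosSemidef) ↔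
      (idTen (r := Fin d) ⇑Φ
        (Matrix.of fun (x y : Fin d × Fin d) =>
          if x.1 = x.2 ∧ y.1 = y.2 then (1 : ℂ) else 0)).PosSemidef := by
  exact ⟨fun hCP => hCP d _ posSemidef_maxEntangled,
    fun hChoi _ _ hM => posSemidef_idTen_of_posSemidef_choiMatrix Φ hChoi hM⟩
end

section
/- If ω_{RSE} = ⊕_k λ_k ω_{Rs^l_k} ⊗ ω_{s^r_k E} is a Markov state (a direct sum over a decomposition H_S = ⊕_k H_{s^l_k} ⊗ H_{s^r_k}, with λ_k a probability distribution and ω_{Rs^l_k}, ω_{s^r_k E} density operators), then S(ω_{RS}) + S(ω_{SE}) − S(ω_{RSE}) − S(ω_S) = 0, i.e., the strong subadditivity inequality is saturated. -/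
open scoped Kronecker ComplexOrder Matrix

/-! After reordering the tensor factors, which does not change the spectrum, `ω` and each of its
marginals `ω_RS`, `ω_SE`, `ω_S` is block diagonal over `k` with blocks `λ_k • (A_k ⊗ B_k)`, where
`(A_k, B_k)` is `(ω_{Rs^l_k}, ω_{s^r_k E})`, `(ω_{Rs^l_k}, ω_{s^r_k})`, `(ω_{s^l_k}, ω_{s^r_k E})`
and `(ω_{s^l_k}, ω_{s^r_k})` respectively. Diagonalising each `A_k` and `B_k` diagonalises such a
matrix, and since the `A_k`, `B_k` have unit trace its entropy is
`H(λ) + ∑_k λ_k (S(A_k) + S(B_k))`. In the alternating sum of the four entropies every term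
`H(λ)`, `λ_k S(ω_{Rs^l_k})`, `λ_k S(ω_{s^l_k})`, ... occurs once with each sign. -/

open Matrix Real

section Spectral

variable {n m : Type*} [Fintype n] [DecidableEq n] [Fintype m] [DecidableEq m]

lemma vnEntropy_of_not_isHermitian {M : Matrix n n ℂ} (hM : ¬M.IsHermitian) :
    vnEntropy M = 0 := by
  simp [vnEntropy, matLog, hM]

lemma Matrix.IsHermitian.eq_conj_diagonal_eigenvalues {M : Matrix n n ℂ} (hM : M.IsHermitian) :
    M = (hM.eigenvectorUnitary : Matrix n n ℂ) * diagonal (fun i => (hM.eigenvalues i : ℂ))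
      * star (hM.eigenvectorUnitary : Matrix n n ℂ) := by
  conv_lhs => rw [hM.spectral_theorem, Unitary.conjStarAlgAut_apply]
  rfl

lemma Matrix.IsHermitian.vnEntropy_eq_sum_negMulLog {M : Matrix n n ℂ} (hM : M.IsHermitian) :
    vnEntropy M = ∑ i, negMulLog (hM.eigenvalues i) := by
  have hdiag := hM.conjStarAlgAut_star_eigenvectorUnitary
  rw [Unitary.conjStarAlgAut_star_apply] at hdiag
  have htrace : (M * matLog M).trace
      = ∑ i, ((hM.eigenvalues i * log (hM.eigenvalues i) : ℝ) : ℂ) := by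
    rw [matLog, dif_pos hM, ← Matrix.mul_assoc, ← Matrix.mul_assoc, trace_mul_comm,
      ← Matrix.mul_assoc, ← Matrix.mul_assoc, hdiag, diagonal_mul_diagonal, trace_diagonal]
    push_cast; rfl
  rw [vnEntropy, htrace, ← Complex.ofReal_sum, Complex.ofReal_re, ← Finset.sum_neg_distrib]
  simp [negMulLog]

lemma Matrix.IsHermitian.vnEntropy_eq_sum_roots_charpoly {M : Matrix n n ℂ} (hM : M.IsHermitian) :
    vnEntropy M = (M.charpoly.roots.map fun z => negMulLog z.re).sum := by
  simp [hM.vnEntropy_eq_sum_negMulLog, hM.roots_charpoly_eq_eigenvalues]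

lemma vnEntropy_submatrix_equiv (M : Matrix n n ℂ) (e : m ≃ n) :
    vnEntropy (M.submatrix e e) = vnEntropy M := by
  by_cases hM : M.IsHermitian
  · rw [(hM.submatrix e).vnEntropy_eq_sum_roots_charpoly, hM.vnEntropy_eq_sum_roots_charpoly,
      ← charpoly_reindex e.symm M]
    rfl
  · have hM' : ¬(M.submatrix e e).IsHermitian := fun h => hM (by simpa using h.submatrix e.symm)
    rw [vnEntropy_of_not_isHermitian hM, vnEntropy_of_not_isHermitian hM']

lemma vnEntropy_unitary_conj_diagonal {W : Matrix n n ℂ} (hW : W ∈ unitaryGroup n ℂ) (d : n → ℝ) :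
    vnEntropy (W * diagonal (fun i => (d i : ℂ)) * star W) = ∑ i, negMulLog (d i) := by
  have hD : (diagonal fun i => (d i : ℂ)).IsHermitian :=
    isHermitian_diagonal_of_self_adjoint _ (by ext; simp)
  have hcharpoly : (W * diagonal (fun i => (d i : ℂ)) * star W).charpoly
      = ∏ i, (Polynomial.X - Polynomial.C (d i : ℂ)) := by
    rw [charpoly_mul_comm, ← Matrix.mul_assoc, (mem_unitaryGroup_iff'.mp hW), Matrix.one_mul,
      charpoly_diagonal]
  rw [star_eq_conjTranspose] at hcharpoly ⊢
  rw [(isHermitian_mul_mul_conjTranspose W hD).vnEntropy_eq_sum_roots_charpoly, hcharpoly,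
    Polynomial.roots_prod _ _ (Finset.prod_ne_zero_iff.mpr fun i _ => Polynomial.X_sub_C_ne_zero _)]
  simp

lemma Matrix.IsHermitian.sum_eigenvalues_eq_one {M : Matrix n n ℂ} (hM : M.IsHermitian)
    (h₁ : M.trace = 1) : ∑ i, hM.eigenvalues i = 1 := by
  have h := hM.trace_eq_sum_eigenvalues
  rw [h₁] at h
  simpa using (congrArg Complex.re h).symm

end Spectral

lemma Real.sum_sum_negMulLog_mul_mul {ι ι' : Type*} [Fintype ι] [Fintype ι'] (c : ℝ)
    {a : ι → ℝ} {b : ι' → ℝ} (ha : ∑ i, a i = 1) (hb : ∑ j, b j = 1) :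
    ∑ i, ∑ j, negMulLog (c * (a i * b j))
      = negMulLog c + c * (∑ i, negMulLog (a i) + ∑ j, negMulLog (b j)) := by
  simp only [negMulLog_mul, Finset.sum_add_distrib, ← Finset.mul_sum, ← Finset.sum_mul, ha, hb]
  ring

section BlockDiagonal

variable {κ : Type*} [Fintype κ] [DecidableEq κ] {m n : κ → Type*}
  [∀ k, Fintype (m k)] [∀ k, DecidableEq (m k)] [∀ k, Fintype (n k)] [∀ k, DecidableEq (n k)]

lemma Matrix.blockDiagonal'_mem_unitaryGroup {R : Type*} [CommRing R] [StarRing R]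
    {U : ∀ k, Matrix (m k) (m k) R} (hU : ∀ k, U k ∈ unitaryGroup (m k) R) :
    blockDiagonal' U ∈ unitaryGroup (Σ k, m k) R := by
  rw [mem_unitaryGroup_iff, star_eq_conjTranspose, blockDiagonal'_conjTranspose,
    ← blockDiagonal'_mul]
  simp_rw [← star_eq_conjTranspose, mem_unitaryGroup_iff.mp (hU _)]
  exact blockDiagonal'_one

lemma Matrix.blockDiagonal'_smul_kronecker_conj {R : Type*} [CommRing R] [StarRing R]
    (c : κ → R) (U : ∀ k, Matrix (m k) (m k) R) (a : ∀ k, m k → R)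
    (V : ∀ k, Matrix (n k) (n k) R) (b : ∀ k, n k → R) :
    blockDiagonal' (fun k => c k •
        ((U k * diagonal (a k) * star (U k)) ⊗ₖ (V k * diagonal (b k) * star (V k))))
      = blockDiagonal' (fun k => U k ⊗ₖ V k)
          * diagonal (fun p => c p.1 * (a p.1 p.2.1 * b p.1 p.2.2))
          * star (blockDiagonal' fun k => U k ⊗ₖ V k) := by
  have hblock : ∀ k,
      c k • ((U k * diagonal (a k) * star (U k)) ⊗ₖ (V k * diagonal (b k) * star (V k)))
        = (U k ⊗ₖ V k) * diagonal (fun p => c k * (a k p.1 * b k p.2)) * star (U k ⊗ₖ V k) := by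
    intro k
    simp only [star_eq_conjTranspose, conjTranspose_kronecker, mul_kronecker_mul,
      diagonal_kronecker_diagonal]
    rw [show (fun p : m k × n k => c k * (a k p.1 * b k p.2)) = c k • fun p => a k p.1 * b k p.2
      from rfl, diagonal_smul, Matrix.mul_smul, Matrix.smul_mul]
  simp_rw [hblock, blockDiagonal'_mul, blockDiagonal'_diagonal, star_eq_conjTranspose,
    blockDiagonal'_conjTranspose]

theorem vnEntropy_blockDiagonal'_smul_kronecker (lam : κ → ℝ)
    {A : ∀ k, Matrix (m k) (m k) ℂ} {B : ∀ k, Matrix (n k) (n k) ℂ}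
    (hA : ∀ k, (A k).IsHermitian) (hA₁ : ∀ k, (A k).trace = 1)
    (hB : ∀ k, (B k).IsHermitian) (hB₁ : ∀ k, (B k).trace = 1) :
    vnEntropy (blockDiagonal' fun k => (lam k : ℂ) • (A k ⊗ₖ B k))
      = ∑ k, negMulLog (lam k) + ∑ k, lam k * (vnEntropy (A k) + vnEntropy (B k)) := by
  let U k := ((hA k).eigenvectorUnitary : Matrix (m k) (m k) ℂ)
  let V k := ((hB k).eigenvectorUnitary : Matrix (n k) (n k) ℂ)
  have hspectral := blockDiagonal'_smul_kronecker_conj (fun k => (lam k : ℂ))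
    U (fun k i => ((hA k).eigenvalues i : ℂ)) V (fun k j => ((hB k).eigenvalues j : ℂ))
  simp only [U, V, ← (hA _).eq_conj_diagonal_eigenvalues, ← (hB _).eq_conj_diagonal_eigenvalues]
    at hspectral
  have hW : blockDiagonal' (fun k => U k ⊗ₖ V k) ∈ unitaryGroup _ ℂ :=
    blockDiagonal'_mem_unitaryGroup fun k =>
      kronecker_mem_unitary (hA k).eigenvectorUnitary.2 (hB k).eigenvectorUnitary.2
  have hentropy := vnEntropy_unitary_conj_diagonal hW
    fun p => lam p.1 * ((hA p.1).eigenvalues p.2.1 * (hB p.1).eigenvalues p.2.2)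
  push_cast at hentropy
  rw [hspectral, hentropy, Fintype.sum_sigma, ← Finset.sum_add_distrib]
  refine Finset.sum_congr rfl fun k _ => ?_
  rw [Fintype.sum_prod_type]
  dsimp only
  rw [sum_sum_negMulLog_mul_mul _ ((hA k).sum_eigenvalues_eq_one (hA₁ k))
    ((hB k).sum_eigenvalues_eq_one (hB₁ k)), (hA k).vnEntropy_eq_sum_negMulLog,
    (hB k).vnEntropy_eq_sum_negMulLog]

end BlockDiagonal

lemma Matrix.IsHermitian.ptraceLeft {a b : Type*} [Fintype a] {M : Matrix (a × b) (a × b) ℂ}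
    (hM : M.IsHermitian) : (ptraceLeft M).IsHermitian := by
  ext i j
  simp only [conjTranspose_apply, _root_.ptraceLeft, of_apply, star_sum]
  exact Finset.sum_congr rfl fun k _ => hM.apply (k, i) (k, j)

lemma Matrix.IsHermitian.ptraceRight {a b : Type*} [Fintype b] {M : Matrix (a × b) (a × b) ℂ}
    (hM : M.IsHermitian) : (ptraceRight M).IsHermitian := by
  ext i j
  simp only [conjTranspose_apply, _root_.ptraceRight, of_apply, star_sum]
  exact Finset.sum_congr rfl fun k _ => hM.apply (i, k) (j, k)

lemma trace_ptraceLeft {a b : Type*} [Fintype a] [Fintype b] (M : Matrix (a × b) (a × b) ℂ) :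
    (ptraceLeft M).trace = M.trace := by
  rw [trace, trace, Fintype.sum_prod_type, Finset.sum_comm]
  rfl

lemma trace_ptraceRight {a b : Type*} [Fintype a] [Fintype b] (M : Matrix (a × b) (a × b) ℂ) :
    (ptraceRight M).trace = M.trace := by
  rw [trace, trace, Fintype.sum_prod_type]
  rfl

section BlockCharacterization

variable {ι κ α : Type*} [DecidableEq κ] [Zero α] {p : κ → Type*} {N : ∀ k, Matrix (p k) (p k) α}

lemma Matrix.eq_blockDiagonal'_of_apply {M : Matrix (Σ k, p k) (Σ k, p k) α}
    (hdiag : ∀ k i j, M ⟨k, i⟩ ⟨k, j⟩ = N k i j) (hoff : ∀ x y : Σ k, p k, x.1 ≠ y.1 → M x y = 0) :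
    M = blockDiagonal' N := by
  ext ⟨k, i⟩ ⟨k', j⟩
  obtain rfl | hk := eq_or_ne k k'
  · rw [hdiag, blockDiagonal'_apply_eq]
  · rw [hoff _ _ hk, blockDiagonal'_apply_ne _ _ _ hk]

lemma Matrix.eq_submatrix_blockDiagonal'_of_apply (g : ι ≃ Σ k, p k) {M : Matrix ι ι α}
    (hdiag : ∀ k i j, M (g.symm ⟨k, i⟩) (g.symm ⟨k, j⟩) = N k i j)
    (hoff : ∀ x y, (g x).1 ≠ (g y).1 → M x y = 0) :
    M = (blockDiagonal' N).submatrix g g := by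
  rw [← eq_blockDiagonal'_of_apply (M := M.submatrix g.symm g.symm) hdiag
    fun x y h => hoff _ _ (by simpa using h)]
  ext x y
  simp

end BlockCharacterization

section MarkovState

variable {κ : Type*} [DecidableEq κ] {m n : κ → Type*} {r e : Type*}

def markovEquivRSE : r × (Σ k, m k × n k) × e ≃ Σ k, (r × m k) × (n k × e) where
  toFun x := ⟨x.2.1.1, ((x.1, x.2.1.2.1), (x.2.1.2.2, x.2.2))⟩
  invFun p := (p.2.1.1, ⟨p.1, (p.2.1.2, p.2.2.1)⟩, p.2.2.2)

def markovEquivRS : r × (Σ k, m k × n k) ≃ Σ k, (r × m k) × n k where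
  toFun x := ⟨x.2.1, ((x.1, x.2.2.1), x.2.2.2)⟩
  invFun p := (p.2.1.1, ⟨p.1, (p.2.1.2, p.2.2)⟩)

def markovEquivSE : (Σ k, m k × n k) × e ≃ Σ k, m k × (n k × e) where
  toFun x := ⟨x.1.1, (x.1.2.1, (x.1.2.2, x.2))⟩
  invFun p := (⟨p.1, (p.2.1, p.2.2.1)⟩, p.2.2.2)

/-- `⊕_k λ_k ω_{Rs^l_k} ⊗ ω_{s^r_k E}`, the basis of `H_S = ⊕_k H_{s^l_k} ⊗ H_{s^r_k}` being
indexed by `Σ k, m k × n k`. -/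
noncomputable def markovState (lam : κ → ℝ) (ωL : ∀ k, Matrix (r × m k) (r × m k) ℂ)
    (ωR : ∀ k, Matrix (n k × e) (n k × e) ℂ) :
    Matrix (r × (Σ k, m k × n k) × e) (r × (Σ k, m k × n k) × e) ℂ :=
  (blockDiagonal' fun k => (lam k : ℂ) • (ωL k ⊗ₖ ωR k)).submatrix markovEquivRSE markovEquivRSE

variable (lam : κ → ℝ) (ωL : ∀ k, Matrix (r × m k) (r × m k) ℂ)
  (ωR : ∀ k, Matrix (n k × e) (n k × e) ℂ)

lemma markovState_apply_same (k : κ) (x x' : r) (i i' : m k) (j j' : n k) (t t' : e) :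
    markovState lam ωL ωR (x, ⟨k, (i, j)⟩, t) (x', ⟨k, (i', j')⟩, t')
      = lam k * (ωL k (x, i) (x', i') * ωR k (j, t) (j', t')) := by
  simp [markovState, markovEquivRSE, blockDiagonal'_apply_eq]

lemma markovState_apply_of_ne {x y : r × (Σ k, m k × n k) × e} (h : x.2.1.1 ≠ y.2.1.1) :
    markovState lam ωL ωR x y = 0 := by
  rw [markovState, submatrix_apply]
  exact blockDiagonal'_apply_ne _ _ _ h

lemma ptraceLeft_markovState [Fintype r] :
    ptraceLeft (markovState lam ωL ωR)
      = (blockDiagonal' fun k => (lam k : ℂ) • (ptraceLeft (ωL k) ⊗ₖ ωR k)).submatrix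
          markovEquivSE markovEquivSE := by
  refine eq_submatrix_blockDiagonal'_of_apply _ (fun k i j => ?_) fun x y h =>
    Finset.sum_eq_zero fun _ _ => markovState_apply_of_ne lam ωL ωR h
  simp [ptraceLeft, markovEquivSE, markovState_apply_same, Finset.mul_sum, Finset.sum_mul]

lemma ptraceRight_ptraceLeft_markovState [Fintype r] [Fintype e] :
    ptraceRight (ptraceLeft (markovState lam ωL ωR))
      = blockDiagonal' fun k => (lam k : ℂ) • (ptraceLeft (ωL k) ⊗ₖ ptraceRight (ωR k)) := by
  refine eq_blockDiagonal'_of_apply (fun k ⟨i, j⟩ ⟨i', j'⟩ => ?_) fun x y h =>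
    Finset.sum_eq_zero fun _ _ => Finset.sum_eq_zero fun _ _ => markovState_apply_of_ne lam ωL ωR h
  simp [ptraceLeft, ptraceRight, markovState_apply_same, Finset.mul_sum, Finset.sum_mul]

lemma of_sum_markovState [Fintype e] :
    (Matrix.of fun x y : r × (Σ k, m k × n k) =>
        ∑ t : e, markovState lam ωL ωR (x.1, x.2, t) (y.1, y.2, t))
      = (blockDiagonal' fun k => (lam k : ℂ) • (ωL k ⊗ₖ ptraceRight (ωR k))).submatrix
          markovEquivRS markovEquivRS := by
  refine eq_submatrix_blockDiagonal'_of_apply _ (fun k i j => ?_) fun x y h =>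
    Finset.sum_eq_zero fun _ _ => markovState_apply_of_ne lam ωL ωR h
  simp [ptraceRight, markovEquivRS, markovState_apply_same, Finset.mul_sum]

end MarkovState

theorem markov_state_saturates_strong_subadditivity_general
    {r e : Type*} [Fintype r] [Fintype e] [DecidableEq r] [DecidableEq e]
    (K : ℕ) (l rr : Fin K → ℕ)
    (lam : Fin K → ℝ)
    (ωL : ∀ k, Matrix (r × Fin (l k)) (r × Fin (l k)) ℂ)
    (hωL : ∀ k, IsDensity (ωL k))
    (ωR : ∀ k, Matrix (Fin (rr k) × e) (Fin (rr k) × e) ℂ)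
    (hωR : ∀ k, IsDensity (ωR k))
    (ω : Matrix (r × (Σ k : Fin K, Fin (l k) × Fin (rr k)) × e)
                (r × (Σ k : Fin K, Fin (l k) × Fin (rr k)) × e) ℂ)
    (hω : ω = Matrix.of fun x y =>
      if h : x.2.1.1 = y.2.1.1 then
        (lam x.2.1.1 : ℂ) *
          ωL x.2.1.1 (x.1, x.2.1.2.1)
            (y.1, (h.symm ▸ y.2.1.2 : Fin (l x.2.1.1) × Fin (rr x.2.1.1)).1) *
          ωR x.2.1.1 (x.2.1.2.2, x.2.2)
            ((h.symm ▸ y.2.1.2 : Fin (l x.2.1.1) × Fin (rr x.2.1.1)).2, y.2.2)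
      else 0) :
    vnEntropy (Matrix.of fun (x y : r × (Σ k : Fin K, Fin (l k) × Fin (rr k))) =>
        ∑ k : e, ω (x.1, x.2, k) (y.1, y.2, k))
      + vnEntropy (ptraceLeft ω) - vnEntropy ω
      - vnEntropy (ptraceRight (ptraceLeft ω)) = 0 := by
  have hmarkov : ω = markovState lam ωL ωR := hω.trans <|
    eq_submatrix_blockDiagonal'_of_apply _ (fun k p q => by simp [markovEquivRSE, mul_assoc])
      fun x y h => dif_neg h
  have hL k : (ωL k).IsHermitian := (hωL k).1.isHermitian
  have hR k : (ωR k).IsHermitian := (hωR k).1.isHermitian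
  have hL₁ k : (ptraceLeft (ωL k)).trace = 1 := (trace_ptraceLeft _).trans (hωL k).2
  have hR₁ k : (ptraceRight (ωR k)).trace = 1 := (trace_ptraceRight _).trans (hωR k).2
  subst hmarkov
  rw [ptraceRight_ptraceLeft_markovState, of_sum_markovState, ptraceLeft_markovState, markovState,
    vnEntropy_submatrix_equiv, vnEntropy_submatrix_equiv, vnEntropy_submatrix_equiv,
    vnEntropy_blockDiagonal'_smul_kronecker lam hL (fun k => (hωL k).2)
      (fun k => (hR k).ptraceRight) hR₁,
    vnEntropy_blockDiagonal'_smul_kronecker lam (fun k => (hL k).ptraceLeft) hL₁ hR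
      (fun k => (hωR k).2),
    vnEntropy_blockDiagonal'_smul_kronecker lam hL (fun k => (hωL k).2) hR (fun k => (hωR k).2),
    vnEntropy_blockDiagonal'_smul_kronecker lam (fun k => (hL k).ptraceLeft) hL₁
      (fun k => (hR k).ptraceRight) hR₁]
  simp only [mul_add, Finset.sum_add_distrib]
  ring

/-- a Markov state saturates strong subadditivity:
`S(ω_RS) + S(ω_SE) - S(ω_RSE) - S(ω_S) = 0`. -/
theorem markov_state_saturates_strong_subadditivity
    {r e : Type*} [Fintype r] [Fintype e] [DecidableEq r] [DecidableEq e]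
    (K : ℕ) (l rr : Fin K → ℕ)
    (lam : Fin K → ℝ) (hlam : ∀ k, 0 ≤ lam k) (hsum : ∑ k, lam k = 1)
    (ωL : ∀ k, Matrix (r × Fin (l k)) (r × Fin (l k)) ℂ)
    (hωL : ∀ k, IsDensity (ωL k))
    (ωR : ∀ k, Matrix (Fin (rr k) × e) (Fin (rr k) × e) ℂ)
    (hωR : ∀ k, IsDensity (ωR k))
    (ω : Matrix (r × (Σ k : Fin K, Fin (l k) × Fin (rr k)) × e)
                (r × (Σ k : Fin K, Fin (l k) × Fin (rr k)) × e) ℂ)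
    (hω : ω = Matrix.of fun x y =>
      if h : x.2.1.1 = y.2.1.1 then
        (lam x.2.1.1 : ℂ) *
          ωL x.2.1.1 (x.1, x.2.1.2.1)
            (y.1, (h.symm ▸ y.2.1.2 : Fin (l x.2.1.1) × Fin (rr x.2.1.1)).1) *
          ωR x.2.1.1 (x.2.1.2.2, x.2.2)
            ((h.symm ▸ y.2.1.2 : Fin (l x.2.1.1) × Fin (rr x.2.1.1)).2, y.2.2)
      else 0) :
    vnEntropy (Matrix.of fun (x y : r × (Σ k : Fin K, Fin (l k) × Fin (rr k))) =>
        ∑ k : e, ω (x.1, x.2, k) (y.1, y.2, k))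
      + vnEntropy (ptraceLeft ω) - vnEntropy ω
      - vnEntropy (ptraceRight (ptraceLeft ω)) = 0 :=
  markov_state_saturates_strong_subadditivity_general K l rr lam ωL hωL ωR hωR ω hω
end

section
/- Let Λ_S be the linear map from 2×2 matrices to 4×4 matrices defined by Λ_S(σ^{(i)}) = (1/2) σ^{(i)} ⊗ I_E for i = 1,2,3 and Λ_S(I_S) = (1/2)(I_{SE} + a Σ_{i=1}^3 σ^{(i)} ⊗ σ^{(i)}), where a ≠ 0 is real. Then Λ_S is trace-preserving and Hermiticity-preserving but not a positive map. -/
/-!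
Trace preservation is a linear condition and Hermiticity preservation a conjugate-linear one, so
both only need checking on the Hermitian basis `1, σ₁, σ₂, σ₃` of `2 × 2` matrices, where they
follow from `tr σᵢ = 0` and `tr (A ⊗ₖ B) = tr A * tr B`.
-/

open scoped Kronecker ComplexOrder Matrix

/-- The Pauli matrices. -/
noncomputable def pauli : Fin 3 → Matrix (Fin 2) (Fin 2) ℂ
  | 0 => !![0, 1; 1, 0]
  | 1 => !![0, -Complex.I; Complex.I, 0]
  | 2 => !![1, 0; 0, -1]

theorem LinearMap.map_star_of_span_isSelfAdjoint {R M N : Type*} [CommSemiring R] [StarRing R]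
    [AddCommMonoid M] [Module R M] [StarAddMonoid M] [StarModule R M]
    [AddCommMonoid N] [Module R N] [StarAddMonoid N] [StarModule R N]
    (f : M →ₗ[R] N) {s : Set M} (hs : Submodule.span R s = ⊤)
    (hs_sa : ∀ x ∈ s, IsSelfAdjoint x) (hf_sa : ∀ x ∈ s, IsSelfAdjoint (f x)) (x : M) :
    f (star x) = star (f x) := by
  have hx : x ∈ Submodule.span R s := hs ▸ Submodule.mem_top
  induction hx using Submodule.span_induction with
  | mem x hx => rw [(hs_sa x hx).star_eq, (hf_sa x hx).star_eq]
  | zero => simp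
  | add x y _ _ hx hy => rw [star_add, map_add, map_add, star_add, hx, hy]
  | smul c x _ hx => rw [star_smul, map_smul, map_smul, star_smul, hx]

theorem Matrix.IsHermitian.kronecker {l m R : Type*} [CommMagma R] [StarMul R]
    {A : Matrix l l R} {B : Matrix m m R} (hA : A.IsHermitian) (hB : B.IsHermitian) :
    (A ⊗ₖ B).IsHermitian := by
  rw [Matrix.IsHermitian, Matrix.conjTranspose_kronecker, hA.eq, hB.eq]

theorem pauli_isHermitian (i : Fin 3) : (pauli i).IsHermitian := by
  fin_cases i <;> ext j k <;> fin_cases j <;> fin_cases k <;> simp [pauli]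

theorem trace_pauli (i : Fin 3) : (pauli i).trace = 0 := by
  fin_cases i <;> simp [pauli, Matrix.trace_fin_two]

theorem eq_pauli_expansion (X : Matrix (Fin 2) (Fin 2) ℂ) :
    X = ((X 0 0 + X 1 1) / 2) • (1 : Matrix (Fin 2) (Fin 2) ℂ)
      + ((X 0 1 + X 1 0) / 2) • pauli 0
      + (Complex.I * (X 0 1 - X 1 0) / 2) • pauli 1
      + ((X 0 0 - X 1 1) / 2) • pauli 2 := by
  ext i j
  fin_cases i <;> fin_cases j <;> simp [pauli, Complex.ext_iff] <;> ring_nf <;> simp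

theorem span_one_pauli : Submodule.span ℂ (insert 1 (Set.range pauli)) = ⊤ := by
  refine eq_top_iff.2 fun X _ => ?_
  have h1 : (1 : Matrix (Fin 2) (Fin 2) ℂ) ∈ Submodule.span ℂ (insert 1 (Set.range pauli)) :=
    Submodule.subset_span (Set.mem_insert _ _)
  have hσ (i : Fin 3) : pauli i ∈ Submodule.span ℂ (insert 1 (Set.range pauli)) :=
    Submodule.subset_span (Set.mem_insert_of_mem _ ⟨i, rfl⟩)
  rw [eq_pauli_expansion X]
  exact add_mem (add_mem (add_mem (Submodule.smul_mem _ _ h1) (Submodule.smul_mem _ _ (hσ 0)))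
    (Submodule.smul_mem _ _ (hσ 1))) (Submodule.smul_mem _ _ (hσ 2))

theorem diagonal_one_zero_eq_half_smul_one_add_pauli :
    (Matrix.diagonal ![1, 0] : Matrix (Fin 2) (Fin 2) ℂ) = (1 / 2 : ℂ) • (1 + pauli 2) := by
  ext i j
  fin_cases i <;> fin_cases j <;> norm_num [pauli]

/-- the assignment map `Λ_S` with `Λ_S(σ^(i)) = (1/2) σ^(i) ⊗ I_E` and
`Λ_S(I_S) = (1/2)(I_SE + a Σ_i σ^(i) ⊗ σ^(i))`, `a ≠ 0`, is trace-preserving and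
Hermiticity-preserving but not positive. -/
theorem assignment_map_pauli_not_positive
    (a : ℝ) (ha : a ≠ 0)
    (Λ : Matrix (Fin 2) (Fin 2) ℂ →ₗ[ℂ] Matrix (Fin 2 × Fin 2) (Fin 2 × Fin 2) ℂ)
    (hΛσ : ∀ i : Fin 3, Λ (pauli i) = (1/2 : ℂ) • (pauli i ⊗ₖ (1 : Matrix (Fin 2) (Fin 2) ℂ)))
    (hΛI : Λ 1 = (1/2 : ℂ) •
      ((1 : Matrix (Fin 2 × Fin 2) (Fin 2 × Fin 2) ℂ) + (a : ℂ) • ∑ i, pauli i ⊗ₖ pauli i)) :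
    (∀ X, (Λ X).trace = X.trace) ∧
    (∀ X, Λ Xᴴ = (Λ X)ᴴ) ∧
    ¬ (∀ X : Matrix (Fin 2) (Fin 2) ℂ, X.PosSemidef → (Λ X).PosSemidef) := by
  refine ⟨fun X => ?_, fun X => ?_, fun hpos => ?_⟩
  · have h : Matrix.traceLinearMap _ ℂ ℂ ∘ₗ Λ = Matrix.traceLinearMap _ ℂ ℂ := by
      refine LinearMap.ext_on span_one_pauli ?_
      rintro _ (rfl | ⟨i, rfl⟩)
      · norm_num [hΛI, Matrix.trace_kronecker, trace_pauli]
      · simp [hΛσ, Matrix.trace_kronecker, trace_pauli]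
    exact LinearMap.congr_fun h X
  · have hhalf : IsSelfAdjoint (1 / 2 : ℂ) := by simp [IsSelfAdjoint]
    have ha_sa : IsSelfAdjoint (a : ℂ) := Complex.conj_ofReal a
    refine Λ.map_star_of_span_isSelfAdjoint span_one_pauli ?_ ?_ X <;>
      rintro _ (rfl | ⟨i, rfl⟩)
    · exact .one _
    · exact pauli_isHermitian i
    · rw [hΛI]
      exact hhalf.smul (.add (.one _) (ha_sa.smul (isSelfAdjoint_sum _
        fun i _ => (pauli_isHermitian i).kronecker (pauli_isHermitian i))))
    · rw [hΛσ i]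
      exact hhalf.smul ((pauli_isHermitian i).kronecker Matrix.isHermitian_one)
  -- The pure state `(1 + σ₃) / 2` is sent to a matrix with diagonal entries `-a/4` and `a/4`.
  · have hP : (Matrix.diagonal ![1, 0] : Matrix (Fin 2) (Fin 2) ℂ).PosSemidef :=
      Matrix.posSemidef_diagonal_iff.2 fun i => by fin_cases i <;> simp
    have hneg := (hpos _ hP).diag_nonneg (i := (1, 0))
    have hnonneg := (hpos _ hP).diag_nonneg (i := (1, 1))
    rw [diagonal_one_zero_eq_half_smul_one_add_pauli, map_smul, map_add, hΛI, hΛσ]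
      at hneg hnonneg
    simp [pauli, Fin.sum_univ_three] at hneg hnonneg
    exact ha (by simpa using le_antisymm hneg hnonneg)
end
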